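/- Multivariate deformed Vandermonde formula: let 0 < τ₂ < τ₁ be reals, let n, k be naturals with k ≥ 1, and let x₁, …, x_{k+1} be real numbers. Then [x₁ + ⋯ + x_{k+1}]_n = Σ M(n; r₁,…,r_k) · τ₁^{Σ_{j=1}^{k} r_j(z_j − (n − s_j))} · τ₂^{Σ_{j=1}^{k} (n − s_j)(x_j − r_j)} · ∏_{j=1}^{k+1} [x_j]_{r_j}, where the sum runs over all tuples (r₁,…,r_k) of naturals with r₁ + ⋯ + r_k ≤ n, and where s_j = r₁ + ⋯ + r_j, r_{k+1} = n − s_k, and z_j = x_{j+1} + ⋯ + x_{k+1}. -/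

import Mathlib

open Finset

noncomputable def dnum (τ₁ τ₂ x : ℝ) : ℝ := (τ₁ ^ x - τ₂ ^ x) / (τ₁ - τ₂)

noncomputable def dfac (τ₁ τ₂ : ℝ) (r : ℕ) : ℝ :=
  ∏ j ∈ Finset.range r, dnum τ₁ τ₂ ((j : ℝ) + 1)

noncomputable def dfall (τ₁ τ₂ x : ℝ) (r : ℕ) : ℝ :=
  ∏ i ∈ Finset.range r, dnum τ₁ τ₂ (x - (i : ℝ))

noncomputable def dbinom (τ₁ τ₂ x : ℝ) (r : ℕ) : ℝ := dfall τ₁ τ₂ x r / dfac τ₁ τ₂ r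

noncomputable def dmulti (τ₁ τ₂ x : ℝ) {k : ℕ} (r : Fin k → ℕ) : ℝ :=
  dfall τ₁ τ₂ x (∑ j, r j) / ∏ j, dfac τ₁ τ₂ (r j)

/-!
Writing `x₁ + ⋯ + x_{k+1} = x₁ + (x₂ + ⋯ + x_{k+1})` reduces the formula, by induction on the
number of variables, to the two-variable case
`[x + y]_n = Σ_{a+b=n} [n]!/([a]! [b]!) τ₁^{a(y-b)} τ₂^{b(x-a)} [x]_a [y]_b`.
That one follows by induction on `n`: for `a + b = n`,
`[x + y - n] = τ₁^{y-b} [x - a] + τ₂^{x-a} [y - b]` splits each summand in two, and the pieces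
recombine through the deformed Pascal rule `τ₂^b [a] + τ₁^a [b] = [a + b]`.
In the multivariate formula over `(k+1)`-tuples `ρ` summing to `n`, the statement's `n - s_j` is
`t_j = ρ_{j+1} + ⋯ + ρ_{k+1}`, and the exponents become `Σ_j ρ_j (z_j - t_j)` and
`Σ_j t_j (x_j - ρ_j)`.
-/

lemma Finset.Nat.sum_antidiagonalTuple_succ {M : Type*} [AddCommMonoid M] (m n : ℕ)
    (f : (Fin (m + 1) → ℕ) → M) :
    ∑ ρ ∈ antidiagonalTuple (m + 1) n, f ρ =
      ∑ p ∈ antidiagonal n, ∑ ρ ∈ antidiagonalTuple m p.2, f (Fin.cons p.1 ρ) := by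
  rw [sum_sigma']
  refine sum_nbij' (fun ρ => ⟨(ρ 0, n - ρ 0), Fin.tail ρ⟩) (fun q => Fin.cons q.1.1 q.2)
    ?_ ?_ ?_ ?_ ?_
  · intro ρ hρ
    simp only [mem_sigma, HasAntidiagonal.mem_antidiagonal, mem_antidiagonalTuple,
      Fin.sum_univ_succ] at hρ ⊢
    exact ⟨by omega, by simp only [Fin.tail]; omega⟩
  · rintro ⟨⟨a, b⟩, ρ⟩ hq
    simp only [mem_sigma, HasAntidiagonal.mem_antidiagonal,
      mem_antidiagonalTuple] at hq ⊢
    rw [Fin.sum_cons, hq.2, hq.1]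
  · intro ρ _
    exact Fin.cons_self_tail ρ
  · rintro ⟨⟨a, b⟩, ρ⟩ hq
    simp only [mem_sigma, HasAntidiagonal.mem_antidiagonal] at hq
    simp [← hq.1]
  · intro ρ _
    rw [Fin.cons_self_tail]

lemma Finset.Nat.sum_antidiagonalTuple_succ_eq_sum_snoc {M : Type*} [AddCommMonoid M]
    (k n : ℕ) (f : (Fin (k + 1) → ℕ) → M) :
    ∑ ρ ∈ antidiagonalTuple (k + 1) n, f ρ =
      ∑ r ∈ (Fintype.piFinset fun _ : Fin k => range (n + 1)).filter (fun r => ∑ j, r j ≤ n),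
        f (Fin.snoc r (n - ∑ i, r i)) := by
  refine (sum_nbij' (fun r => Fin.snoc r (n - ∑ i, r i)) Fin.init ?_ ?_ ?_ ?_ ?_).symm
  · intro r hr
    rw [mem_filter] at hr
    simp [mem_antidiagonalTuple, Fin.sum_univ_castSucc, hr.2]
  · intro ρ hρ
    simp only [mem_antidiagonalTuple, Fin.sum_univ_castSucc] at hρ
    simp only [mem_filter, Fintype.mem_piFinset, mem_range, Fin.init]
    refine ⟨fun i => ?_, by omega⟩
    have := single_le_sum (fun i _ => Nat.zero_le (ρ (Fin.castSucc i))) (mem_univ i)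
    omega
  · intro r _
    exact Fin.init_snoc _ _
  · intro ρ hρ
    simp only [mem_antidiagonalTuple, Fin.sum_univ_castSucc] at hρ
    simp only [Fin.init]
    rw [← hρ, Nat.add_sub_cancel_left]
    exact Fin.snoc_init_self ρ
  · intro r _
    rfl

lemma Fin.filter_val_lt_eq_Ioi_castSucc {k : ℕ} (j : Fin k) :
    (univ.filter fun i : Fin (k + 1) => (j : ℕ) < (i : ℕ)) = Ioi j.castSucc := by
  ext i
  simp [Fin.lt_def]

lemma Fin.Ioi_last (k : ℕ) : Ioi (Fin.last k) = ∅ :=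
  Ioi_eq_empty.2 fun b _ => Fin.le_last b

lemma Finset.sum_Iic_add_sum_Ioi {α M : Type*} [Fintype α] [LinearOrder α]
    [LocallyFiniteOrderBot α] [LocallyFiniteOrderTop α] [AddCommMonoid M] (f : α → M) (a : α) :
    ∑ i ∈ Iic a, f i + ∑ i ∈ Ioi a, f i = ∑ i, f i := by
  rw [← filter_ge_eq_Iic, ← filter_lt_eq_Ioi]
  simpa only [not_le] using sum_filter_add_sum_filter_not univ (· ≤ a) f

lemma dnum_zero (τ₁ τ₂ : ℝ) : dnum τ₁ τ₂ 0 = 0 := by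
  simp [dnum]

lemma dnum_add {τ₁ τ₂ : ℝ} (h₁ : 0 < τ₁) (h₂ : 0 < τ₂) (a b : ℝ) :
    dnum τ₁ τ₂ (a + b) = τ₁ ^ b * dnum τ₁ τ₂ a + τ₂ ^ a * dnum τ₁ τ₂ b := by
  unfold dnum
  rw [Real.rpow_add h₁, Real.rpow_add h₂]
  ring

lemma dnum_pos {τ₁ τ₂ : ℝ} (h₂ : 0 < τ₂) (h : τ₂ < τ₁) {x : ℝ} (hx : 0 < x) :
    0 < dnum τ₁ τ₂ x :=
  div_pos (sub_pos.2 (Real.rpow_lt_rpow h₂.le h hx)) (sub_pos.2 h)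

lemma dfac_succ (τ₁ τ₂ : ℝ) (r : ℕ) :
    dfac τ₁ τ₂ (r + 1) = dfac τ₁ τ₂ r * dnum τ₁ τ₂ (r + 1) :=
  prod_range_succ _ _

lemma dfac_pos {τ₁ τ₂ : ℝ} (h₂ : 0 < τ₂) (h : τ₂ < τ₁) (r : ℕ) : 0 < dfac τ₁ τ₂ r :=
  prod_pos fun _ _ => dnum_pos h₂ h (by positivity)

lemma dfall_succ (τ₁ τ₂ x : ℝ) (r : ℕ) :
    dfall τ₁ τ₂ x (r + 1) = dfall τ₁ τ₂ x r * dnum τ₁ τ₂ (x - r) :=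
  prod_range_succ _ _

lemma dfall_mul_dfac_sub (τ₁ τ₂ : ℝ) {n s : ℕ} (h : s ≤ n) :
    dfall τ₁ τ₂ n s * dfac τ₁ τ₂ (n - s) = dfac τ₁ τ₂ n := by
  induction s with
  | zero => simp [dfall]
  | succ s ih =>
    have hs : n - s = n - (s + 1) + 1 := by omega
    have hcast : ((n - (s + 1) : ℕ) : ℝ) + 1 = n - s := by
      rw [Nat.cast_sub h]; push_cast; ring
    rw [← ih (by omega), hs, dfac_succ, dfall_succ, hcast]
    ring

section Binomial

variable (τ₁ τ₂ x y : ℝ)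

/-- The two-variable summand without its factor `[y]_b`, which the multivariate induction
replaces by its own expansion. -/
noncomputable def dbinomWeight (p : ℕ × ℕ) : ℝ :=
  dfac τ₁ τ₂ (p.1 + p.2) / (dfac τ₁ τ₂ p.1 * dfac τ₁ τ₂ p.2) *
    τ₁ ^ ((p.1 : ℝ) * (y - p.2)) * τ₂ ^ ((p.2 : ℝ) * (x - p.1)) * dfall τ₁ τ₂ x p.1

lemma dbinomWeight_mul_dnum {τ₁ τ₂ : ℝ} (h₂ : 0 < τ₂) (h : τ₂ < τ₁) (x y : ℝ) (a b : ℕ) :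
    dbinomWeight τ₁ τ₂ x y (a, b) * dfall τ₁ τ₂ y b * dnum τ₁ τ₂ (x + y - (a + b)) *
        dnum τ₁ τ₂ (a + b + 1) =
      dbinomWeight τ₁ τ₂ x y (a + 1, b) * dfall τ₁ τ₂ y b *
          (τ₂ ^ (b : ℝ) * dnum τ₁ τ₂ (a + 1)) +
        dbinomWeight τ₁ τ₂ x y (a, b + 1) * dfall τ₁ τ₂ y (b + 1) *
          (τ₁ ^ (a : ℝ) * dnum τ₁ τ₂ (b + 1)) := by
  have h₁ : 0 < τ₁ := h₂.trans h
  have hsplit : x + y - (a + b) = (x - a) + (y - b) := by ring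
  have ha := dnum_pos h₂ h (x := a + 1) (by positivity)
  have hb := dnum_pos h₂ h (x := b + 1) (by positivity)
  have hfa := dfac_pos h₂ h a
  have hfb := dfac_pos h₂ h b
  have e₁ : τ₁ ^ (((a + 1 : ℕ) : ℝ) * (y - b)) = τ₁ ^ ((a : ℝ) * (y - b)) * τ₁ ^ (y - b) := by
    rw [← Real.rpow_add h₁]; push_cast; ring_nf
  have e₂ : τ₂ ^ ((b : ℝ) * (x - ((a + 1 : ℕ) : ℝ))) =
      τ₂ ^ ((b : ℝ) * (x - a)) / τ₂ ^ (b : ℝ) := by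
    rw [← Real.rpow_sub h₂]; push_cast; ring_nf
  have e₃ : τ₁ ^ ((a : ℝ) * (y - ((b + 1 : ℕ) : ℝ))) =
      τ₁ ^ ((a : ℝ) * (y - b)) / τ₁ ^ (a : ℝ) := by
    rw [← Real.rpow_sub h₁]; push_cast; ring_nf
  have e₄ : τ₂ ^ (((b + 1 : ℕ) : ℝ) * (x - a)) = τ₂ ^ ((b : ℝ) * (x - a)) * τ₂ ^ (x - a) := by
    rw [← Real.rpow_add h₂]; push_cast; ring_nf
  have hτa := Real.rpow_pos_of_pos h₁ (a : ℝ)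
  have hτb := Real.rpow_pos_of_pos h₂ (b : ℝ)
  unfold dbinomWeight
  rw [hsplit, dnum_add h₁ h₂, e₁, e₂, e₃, e₄, Nat.add_right_comm a 1 b, ← add_assoc a b 1,
    dfac_succ, dfac_succ, dfac_succ, dfall_succ, dfall_succ]
  push_cast
  field_simp

theorem dfall_add {τ₁ τ₂ : ℝ} (h₂ : 0 < τ₂) (h : τ₂ < τ₁) (x y : ℝ) (n : ℕ) :
    dfall τ₁ τ₂ (x + y) n =
      ∑ p ∈ antidiagonal n, dbinomWeight τ₁ τ₂ x y p * dfall τ₁ τ₂ y p.2 := by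
  set V : ℕ × ℕ → ℝ := fun p => dbinomWeight τ₁ τ₂ x y p * dfall τ₁ τ₂ y p.2
  induction n with
  | zero => simp [V, dbinomWeight, dfall, dfac]
  | succ n ih =>
    have hn := dnum_pos h₂ h (x := n + 1) (by positivity)
    -- multiplying by `[n + 1]` lets the Pascal rule recombine the pieces without division
    refine mul_right_cancel₀ hn.ne' ?_
    calc dfall τ₁ τ₂ (x + y) (n + 1) * dnum τ₁ τ₂ (n + 1)
        = ∑ p ∈ antidiagonal n, V p * dnum τ₁ τ₂ (x + y - n) * dnum τ₁ τ₂ (n + 1) := by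
          rw [dfall_succ, ih, sum_mul, sum_mul]
      _ = ∑ p ∈ antidiagonal n,
            (V (p.1 + 1, p.2) * (τ₂ ^ (p.2 : ℝ) * dnum τ₁ τ₂ ((p.1 + 1 : ℕ) : ℝ)) +
              V (p.1, p.2 + 1) * (τ₁ ^ (p.1 : ℝ) * dnum τ₁ τ₂ ((p.2 + 1 : ℕ) : ℝ))) := by
          refine sum_congr rfl fun ⟨a, b⟩ hp => ?_
          rw [HasAntidiagonal.mem_antidiagonal] at hp
          subst hp
          push_cast
          exact dbinomWeight_mul_dnum h₂ h x y a b
      _ = ∑ p ∈ antidiagonal (n + 1),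
            V p * (τ₂ ^ (p.2 : ℝ) * dnum τ₁ τ₂ p.1 + τ₁ ^ (p.1 : ℝ) * dnum τ₁ τ₂ p.2) := by
          simp_rw [mul_add, sum_add_distrib]
          rw [Nat.sum_antidiagonal_succ, Nat.sum_antidiagonal_succ']
          simp [dnum_zero]
      _ = (∑ p ∈ antidiagonal (n + 1), V p) * dnum τ₁ τ₂ (n + 1) := by
          rw [sum_mul]
          refine sum_congr rfl fun ⟨a, b⟩ hp => ?_
          rw [HasAntidiagonal.mem_antidiagonal] at hp
          rw [add_comm, ← dnum_add (h₂.trans h) h₂, add_comm (b : ℝ), ← Nat.cast_add, hp,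
            Nat.cast_succ]

end Binomial

section Multinomial

variable (τ₁ τ₂ : ℝ) {m : ℕ}

noncomputable def dmultinom (ρ : Fin m → ℕ) : ℝ :=
  dfac τ₁ τ₂ (∑ j, ρ j) / ∏ j, dfac τ₁ τ₂ (ρ j)

def vandermondeExp₁ (x : Fin m → ℝ) (ρ : Fin m → ℕ) : ℝ :=
  ∑ j, (ρ j : ℝ) * (∑ i ∈ Ioi j, x i - ∑ i ∈ Ioi j, (ρ i : ℝ))

def vandermondeExp₂ (x : Fin m → ℝ) (ρ : Fin m → ℕ) : ℝ :=
  ∑ j, (∑ i ∈ Ioi j, (ρ i : ℝ)) * (x j - ρ j)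

noncomputable def dmultinomTerm (x : Fin m → ℝ) (ρ : Fin m → ℕ) : ℝ :=
  dmultinom τ₁ τ₂ ρ * τ₁ ^ vandermondeExp₁ x ρ * τ₂ ^ vandermondeExp₂ x ρ *
    ∏ j, dfall τ₁ τ₂ (x j) (ρ j)

variable {τ₁ τ₂}

lemma vandermondeExp₁_cons (x₀ : ℝ) (x : Fin m → ℝ) (a : ℕ) (ρ : Fin m → ℕ) :
    vandermondeExp₁ (Fin.cons x₀ x : Fin (m + 1) → ℝ) (Fin.cons a ρ : Fin (m + 1) → ℕ) =
      a * (∑ i, x i - ∑ i, (ρ i : ℝ)) + vandermondeExp₁ x ρ := by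
  simp [vandermondeExp₁, Fin.sum_univ_succ]

lemma vandermondeExp₂_cons (x₀ : ℝ) (x : Fin m → ℝ) (a : ℕ) (ρ : Fin m → ℕ) :
    vandermondeExp₂ (Fin.cons x₀ x : Fin (m + 1) → ℝ) (Fin.cons a ρ : Fin (m + 1) → ℕ) =
      (∑ i, (ρ i : ℝ)) * (x₀ - a) + vandermondeExp₂ x ρ := by
  simp [vandermondeExp₂, Fin.sum_univ_succ]

lemma dmultinom_cons (h₂ : 0 < τ₂) (h : τ₂ < τ₁) (a : ℕ) (ρ : Fin m → ℕ) :
    dmultinom τ₁ τ₂ (Fin.cons a ρ : Fin (m + 1) → ℕ) =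
      dfac τ₁ τ₂ (a + ∑ i, ρ i) / (dfac τ₁ τ₂ a * dfac τ₁ τ₂ (∑ i, ρ i)) * dmultinom τ₁ τ₂ ρ := by
  have := dfac_pos h₂ h (∑ i, ρ i)
  simp only [dmultinom, Fin.sum_cons, Fin.prod_univ_succ, Fin.cons_zero, Fin.cons_succ]
  field_simp

lemma dmultinomTerm_cons (h₂ : 0 < τ₂) (h : τ₂ < τ₁) (x₀ : ℝ) (x : Fin m → ℝ) (a : ℕ)
    (ρ : Fin m → ℕ) :
    dmultinomTerm τ₁ τ₂ (Fin.cons x₀ x : Fin (m + 1) → ℝ) (Fin.cons a ρ : Fin (m + 1) → ℕ) =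
      dbinomWeight τ₁ τ₂ x₀ (∑ i, x i) (a, ∑ i, ρ i) * dmultinomTerm τ₁ τ₂ x ρ := by
  have h₁ : 0 < τ₁ := h₂.trans h
  simp only [dmultinomTerm, dbinomWeight, dmultinom_cons h₂ h, vandermondeExp₁_cons,
    vandermondeExp₂_cons, Real.rpow_add h₁, Real.rpow_add h₂, Fin.prod_univ_succ, Fin.cons_zero,
    Fin.cons_succ, Nat.cast_sum]
  ring

theorem dfall_sum (h₂ : 0 < τ₂) (h : τ₂ < τ₁) (x : Fin m → ℝ) (n : ℕ) :
    dfall τ₁ τ₂ (∑ i, x i) n = ∑ ρ ∈ Nat.antidiagonalTuple m n, dmultinomTerm τ₁ τ₂ x ρ := by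
  induction m generalizing n with
  | zero =>
    cases n with
    | zero => simp [dmultinomTerm, dmultinom, vandermondeExp₁, vandermondeExp₂, dfall, dfac]
    | succ n => simp [dfall, prod_range_succ', dnum_zero]
  | succ m ih =>
    refine Fin.consCases (fun x₀ x => ?_) x
    calc dfall τ₁ τ₂ (∑ i, (Fin.cons x₀ x : Fin (m + 1) → ℝ) i) n
        = ∑ p ∈ antidiagonal n,
            dbinomWeight τ₁ τ₂ x₀ (∑ i, x i) p * dfall τ₁ τ₂ (∑ i, x i) p.2 := by
          rw [Fin.sum_cons, dfall_add h₂ h]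
      _ = ∑ p ∈ antidiagonal n, ∑ ρ ∈ Nat.antidiagonalTuple m p.2,
            dmultinomTerm τ₁ τ₂ (Fin.cons x₀ x : Fin (m + 1) → ℝ) (Fin.cons p.1 ρ) := by
          refine sum_congr rfl fun p _ => ?_
          rw [ih, mul_sum]
          refine sum_congr rfl fun ρ hρ => ?_
          rw [dmultinomTerm_cons h₂ h, Nat.mem_antidiagonalTuple.1 hρ]
      _ = _ := (Nat.sum_antidiagonalTuple_succ m n _).symm

end Multinomial

section Snoc

variable {k n : ℕ} (r : Fin k → ℕ)

lemma sum_Ioi_castSucc_snoc (hr : ∑ i, r i ≤ n) (j : Fin k) :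
    ∑ i ∈ Ioi j.castSucc, ((Fin.snoc r (n - ∑ i, r i) : Fin (k + 1) → ℕ) i : ℝ) =
      n - ((∑ i ∈ Iic j, r i : ℕ) : ℝ) := by
  have hsplit := sum_Iic_add_sum_Ioi (Fin.snoc r (n - ∑ i, r i) : Fin (k + 1) → ℕ) j.castSucc
  simp only [Fin.sum_Iic_castSucc, Fin.snoc_castSucc, Fin.sum_univ_castSucc, Fin.snoc_last,
    Nat.add_sub_cancel' hr] at hsplit
  rw [← Nat.cast_sum, ← Nat.cast_sub (by omega)]
  congr 1
  omega

lemma dmultinom_snoc {τ₁ τ₂ : ℝ} (h₂ : 0 < τ₂) (h : τ₂ < τ₁) (hr : ∑ i, r i ≤ n) :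
    dmultinom τ₁ τ₂ (Fin.snoc r (n - ∑ i, r i) : Fin (k + 1) → ℕ) = dmulti τ₁ τ₂ n r := by
  have := dfac_pos h₂ h (n - ∑ i, r i)
  simp only [dmultinom, dmulti, Fin.sum_univ_castSucc, Fin.prod_univ_castSucc, Fin.snoc_castSucc,
    Fin.snoc_last, Nat.add_sub_cancel' hr, ← dfall_mul_dfac_sub τ₁ τ₂ hr]
  field_simp

lemma vandermondeExp₁_snoc (x : Fin (k + 1) → ℝ) (hr : ∑ i, r i ≤ n) :
    vandermondeExp₁ x (Fin.snoc r (n - ∑ i, r i)) =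
      ∑ j : Fin k,
        (r j : ℝ) * (∑ i ∈ Ioi j.castSucc, x i - (n - ((∑ i ∈ Iic j, r i : ℕ) : ℝ))) := by
  simp [vandermondeExp₁, Fin.sum_univ_castSucc, Fin.Ioi_last, sum_Ioi_castSucc_snoc r hr]

lemma vandermondeExp₂_snoc (x : Fin (k + 1) → ℝ) (hr : ∑ i, r i ≤ n) :
    vandermondeExp₂ x (Fin.snoc r (n - ∑ i, r i)) =
      ∑ j : Fin k, (n - ((∑ i ∈ Iic j, r i : ℕ) : ℝ)) * (x j.castSucc - r j) := by
  simp [vandermondeExp₂, Fin.sum_univ_castSucc, Fin.Ioi_last, sum_Ioi_castSucc_snoc r hr]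

end Snoc

theorem deformed_multivariate_vandermonde_general
    (τ₁ τ₂ : ℝ) (hτ₂ : 0 < τ₂) (hττ : τ₂ < τ₁)
    (n k : ℕ) (x : Fin (k + 1) → ℝ) :
    dfall τ₁ τ₂ (∑ i, x i) n =
      ∑ r ∈ (Fintype.piFinset fun _ : Fin k => Finset.range (n + 1)).filter
          (fun r => ∑ j, r j ≤ n),
        dmulti τ₁ τ₂ (n : ℝ) r *
          τ₁ ^ (∑ j : Fin k, (r j : ℝ) *
              ((∑ i ∈ Finset.univ.filter fun i : Fin (k + 1) => (j : ℕ) < (i : ℕ), x i) -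
                ((n : ℝ) - ((∑ i ∈ Finset.Iic j, r i : ℕ) : ℝ)))) *
          τ₂ ^ (∑ j : Fin k, ((n : ℝ) - ((∑ i ∈ Finset.Iic j, r i : ℕ) : ℝ)) *
              (x j.castSucc - (r j : ℝ))) *
          ∏ j : Fin (k + 1), dfall τ₁ τ₂ (x j) ((Fin.snoc r (n - ∑ i, r i) : Fin (k + 1) → ℕ) j) := by
  rw [dfall_sum hτ₂ hττ x n, Nat.sum_antidiagonalTuple_succ_eq_sum_snoc]
  refine sum_congr rfl fun r hr => ?_
  have hr : ∑ i, r i ≤ n := (mem_filter.1 hr).2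
  simp only [dmultinomTerm, Fin.filter_val_lt_eq_Ioi_castSucc]
  rw [dmultinom_snoc r hτ₂ hττ hr, vandermondeExp₁_snoc r x hr, vandermondeExp₂_snoc r x hr]

/-- Multivariate deformed Vandermonde formula:
`[x₁+⋯+x_{k+1}]_n = Σ M(n; r₁,…,r_k) τ₁^{Σ_j r_j(z_j−(n−s_j))}
  τ₂^{Σ_j (n−s_j)(x_j−r_j)} Π_j [x_j]_{r_j}`,
summed over tuples `(r₁,…,r_k)` with `r₁+⋯+r_k ≤ n`, where `s_j = r₁+⋯+r_j`,
`r_{k+1} = n − s_k` and `z_j = x_{j+1}+⋯+x_{k+1}`. -/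
theorem deformed_multivariate_vandermonde
    (τ₁ τ₂ : ℝ) (hτ₂ : 0 < τ₂) (hττ : τ₂ < τ₁)
    (n k : ℕ) (hk : 1 ≤ k) (x : Fin (k + 1) → ℝ) :
    dfall τ₁ τ₂ (∑ i, x i) n =
      ∑ r ∈ (Fintype.piFinset fun _ : Fin k => Finset.range (n + 1)).filter
          (fun r => ∑ j, r j ≤ n),
        dmulti τ₁ τ₂ (n : ℝ) r *
          τ₁ ^ (∑ j : Fin k, (r j : ℝ) *
              ((∑ i ∈ Finset.univ.filter fun i : Fin (k + 1) => (j : ℕ) < (i : ℕ), x i) -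
                ((n : ℝ) - ((∑ i ∈ Finset.Iic j, r i : ℕ) : ℝ)))) *
          τ₂ ^ (∑ j : Fin k, ((n : ℝ) - ((∑ i ∈ Finset.Iic j, r i : ℕ) : ℝ)) *
              (x j.castSucc - (r j : ℝ))) *
          ∏ j : Fin (k + 1), dfall τ₁ τ₂ (x j) ((Fin.snoc r (n - ∑ i, r i) : Fin (k + 1) → ℕ) j) :=
  deformed_multivariate_vandermonde_general τ₁ τ₂ hτ₂ hττ n k x
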